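/- Main result (Jacobiator of the YM bracket): for four modes with k₁+k₂+k₃+k₄ = 0, B([[ξ₁,ξ₂]_YM,ξ₃]_YM + [[ξ₂,ξ₃]_YM,ξ₁]_YM + [[ξ₃,ξ₁]_YM,ξ₂]_YM, ξ₄) = −v₄ + (δ′v₃), where each inner YM bracket is the mode carried at momentum kᵢ+kⱼ and the outer YM bracket uses that momentum. -/
import Mathlib


namespace Stmt8

variable {V : Type*} [AddCommGroup V] [Module ℝ V]

/-- The YM bracket of modes: polarization
`2(ξ₁·k₂)ξ₂ − 2(ξ₂·k₁)ξ₁ + (ξ₁·ξ₂)(k₁−k₂) + (ξ₁·k₁)ξ₂ − (ξ₂·k₂)ξ₁`,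
momentum `k₁+k₂`. -/
def ymMode (B : LinearMap.BilinForm ℝ V) (p q : V × V) : V × V :=
  ((2 * B p.1 q.2) • q.1 - (2 * B q.1 p.2) • p.1 + B p.1 q.1 • (p.2 - q.2)
    + B p.1 p.2 • q.1 - B q.1 q.2 • p.1, p.2 + q.2)

/-- The cubic-vertex cochain `v₃` on three modes. -/
def v₃ (B : LinearMap.BilinForm ℝ V) (p q r : V × V) : ℝ :=
  B q.1 r.2 * B p.1 r.1 - B p.1 r.2 * B q.1 r.1
    + B r.1 p.2 * B q.1 p.1 - B q.1 p.2 * B r.1 p.1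
    + B p.1 q.2 * B r.1 q.1 - B r.1 q.2 * B p.1 q.1

/-- The quartic-vertex cochain `v₄` on four modes. -/
def v₄ (B : LinearMap.BilinForm ℝ V) (m₁ m₂ m₃ m₄ : V × V) : ℝ :=
  B (m₁.2 + m₂.2) (m₁.2 + m₂.2)
      * (B m₁.1 m₃.1 * B m₂.1 m₄.1 - B m₂.1 m₃.1 * B m₁.1 m₄.1)
    + B (m₂.2 + m₃.2) (m₂.2 + m₃.2)
      * (B m₂.1 m₁.1 * B m₃.1 m₄.1 - B m₃.1 m₁.1 * B m₂.1 m₄.1)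
    + B (m₁.2 + m₃.2) (m₁.2 + m₃.2)
      * (B m₁.1 m₄.1 * B m₃.1 m₂.1 - B m₃.1 m₄.1 * B m₁.1 m₂.1)

/-- The operation `δ′` applied to a function of three modes. -/
def δ' (B : LinearMap.BilinForm ℝ V) (f : V × V → V × V → V × V → ℝ)
    (m₁ m₂ m₃ m₄ : V × V) : ℝ :=
  B m₁.1 m₁.2 * f m₂ m₃ m₄ - B m₂.1 m₂.2 * f m₁ m₃ m₄
    + B m₃.1 m₃.2 * f m₁ m₂ m₄ - B m₄.1 m₄.2 * f m₁ m₂ m₃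

/-- Main result: the Jacobiator of the YM bracket, paired with `ξ₄`, equals
`−v₄ + δ′v₃` when `k₁+k₂+k₃+k₄ = 0`. -/
theorem ym_jacobiator (B : LinearMap.BilinForm ℝ V) (hB : B.IsSymm)
    (ξ₁ k₁ ξ₂ k₂ ξ₃ k₃ ξ₄ k₄ : V) (h : k₁ + k₂ + k₃ + k₄ = 0) :
    B ((ymMode B (ymMode B (ξ₁, k₁) (ξ₂, k₂)) (ξ₃, k₃)).1
        + (ymMode B (ymMode B (ξ₂, k₂) (ξ₃, k₃)) (ξ₁, k₁)).1
        + (ymMode B (ymMode B (ξ₃, k₃) (ξ₁, k₁)) (ξ₂, k₂)).1) ξ₄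
      = -v₄ B (ξ₁, k₁) (ξ₂, k₂) (ξ₃, k₃) (ξ₄, k₄)
        + δ' B (v₃ B) (ξ₁, k₁) (ξ₂, k₂) (ξ₃, k₃) (ξ₄, k₄) := by
  have hk4 : k₄ = -(k₁+k₂+k₃) := by rw [eq_neg_iff_add_eq_zero, ← h]; abel
  subst hk4
  simp only [ymMode, v₃, v₄, δ', map_add, map_sub, map_smul, map_neg,
    LinearMap.add_apply, LinearMap.sub_apply, LinearMap.smul_apply, LinearMap.neg_apply,
    smul_eq_mul, hB.eq ξ₁ ξ₁, hB.eq ξ₂ ξ₁, hB.eq ξ₃ ξ₁, hB.eq ξ₄ ξ₁, hB.eq k₁ ξ₁, hB.eq k₂ ξ₁, hB.eq k₃ ξ₁, hB.eq ξ₂ ξ₂, hB.eq ξ₃ ξ₂, hB.eq ξ₄ ξ₂, hB.eq k₁ ξ₂, hB.eq k₂ ξ₂, hB.eq k₃ ξ₂, hB.eq ξ₃ ξ₃, hB.eq ξ₄ ξ₃, hB.eq k₁ ξ₃, hB.eq k₂ ξ₃, hB.eq k₃ ξ₃, hB.eq ξ₄ ξ₄, hB.eq k₁ ξ₄, hB.eq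 k₂ ξ₄, hB.eq k₃ ξ₄, hB.eq k₁ k₁, hB.eq k₂ k₁, hB.eq k₃ k₁, hB.eq k₂ k₂, hB.eq k₃ k₂, hB.eq k₃ k₃]
  ring

end Stmt8
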